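/- arXiv:1801.05360 — 2 statements merged into one kernel-verified Lean document; each statement's English description precedes it below -/
import Mathlib

section
/- Let P_s ∈ ℝ³ and let Q be any point in the synchronous circle O(P_{s+k}, ε) (so Q.t = P_{s+k}.t and the (x,y)-distance from Q to P_{s+k} is at most ε). Then for each i ∈ [1,k], the synchronized point P'_{s+i} of P_{s+i} w.r.t. segment P_sQ lies inside the cone C(P_s, O(P_{s+k}, ε)); moreover sed(P_{s+i}, P_sQ) ≤ ε for all i if and only if P'_{s+i} ∈ O-cone section, i.e., the segment P_sQ passes through every cone C(P_s, O(P_{s+i}, ε)). -/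
noncomputable section

/-- Points of ℝ³, written (x, y, t) with the third coordinate interpreted as time. -/
abbrev Pt : Type := EuclideanSpace ℝ (Fin 3)

/-- The time coordinate of a point. -/
def tm (P : Pt) : ℝ := P 2

/-- Spatial (x,y)-Euclidean distance between two points of ℝ³. -/
def sdist (P Q : Pt) : ℝ := Real.sqrt ((P 0 - Q 0)^2 + (P 1 - Q 1)^2)

/-- The synchronized point of `P` w.r.t. the segment from `Ps` to `E`:
linear interpolation with coefficient `c = (P.t - Ps.t)/(E.t - Ps.t)`. -/
def sync (Ps E P : Pt) : Pt := Ps + ((tm P - tm Ps) / (tm E - tm Ps)) • (E - Ps)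

/-- The synchronous Euclidean distance of `P` to the segment from `Ps` to `E`. -/
def sed (P Ps E : Pt) : ℝ := dist P (sync Ps E P)

/-- The spatio-temporal cone with apex `Ps` over the disk of radius `ε`
centered at `C` in the plane `X.t = C.t`: the union of all segments from `Ps`
to points of that disk. -/
def cone (Ps C : Pt) (ε : ℝ) : Set Pt :=
  {X | ∃ Z : Pt, tm Z = tm C ∧ sdist Z C ≤ ε ∧ X ∈ segment ℝ Ps Z}

/-!
Since `tm` is affine, the synchronized point of `P` on a segment `Ps E` lies at time `tm P`,
and the cone over a disk meets its base plane exactly in that disk (a segment from an apex at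
another time crosses the base plane only at its endpoint). Hence the synchronized point of
`P_{s+i}` is in the cone over `O(P_{s+i}, ε)` iff its spatial distance to `P_{s+i}`, which is
the SED, is at most `ε`; and it is in the cone over `O(P_{s+k}, ε)` because it lies on the
segment `P_s Q` with `Q` in that disk.
-/

open AffineMap

lemma sync_eq_lineMap (Ps E P : Pt) :
    sync Ps E P = lineMap Ps E ((tm P - tm Ps) / (tm E - tm Ps)) := by
  rw [sync, lineMap_apply, vsub_eq_sub, vadd_eq_add, add_comm]

lemma tm_lineMap (A B : Pt) (c : ℝ) : tm (lineMap A B c) = lineMap (tm A) (tm B) c := by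
  simp only [tm, lineMap_apply_module, PiLp.add_apply, PiLp.smul_apply, smul_eq_mul]

lemma tm_sync {Ps E : Pt} (h : tm Ps ≠ tm E) (P : Pt) : tm (sync Ps E P) = tm P := by
  have h' : tm E - tm Ps ≠ 0 := sub_ne_zero.mpr h.symm
  rw [sync_eq_lineMap, tm_lineMap, lineMap_apply_ring']
  field_simp
  ring

-- No `tm Ps < tm E` is needed: when `tm E = tm Ps` the coefficient is `_ / 0 = 0`.
lemma sync_mem_segment {Ps E P : Pt} (h₀ : tm Ps ≤ tm P) (h₁ : tm P ≤ tm E) :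
    sync Ps E P ∈ segment ℝ Ps E := by
  rw [sync_eq_lineMap, segment_eq_image_lineMap]
  exact Set.mem_image_of_mem _
    ⟨div_nonneg (by linarith) (by linarith), div_le_one_of_le₀ (by linarith) (by linarith)⟩

lemma dist_eq_sdist {X Y : Pt} (h : tm X = tm Y) : dist X Y = sdist X Y := by
  have h2 : X 2 = Y 2 := h
  rw [EuclideanSpace.dist_eq, sdist, Fin.sum_univ_three]
  simp only [Real.dist_eq, sq_abs, h2, sub_self, ne_eq, OfNat.ofNat_ne_zero, not_false_eq_true,
    zero_pow, add_zero]

lemma mem_cone_iff_sdist_le {Ps C X : Pt} {ε : ℝ} (hPs : tm Ps ≠ tm C) (hX : tm X = tm C) :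
    X ∈ cone Ps C ε ↔ sdist X C ≤ ε := by
  constructor
  · rintro ⟨Z, hZ, hZC, hXZ⟩
    rw [segment_eq_image_lineMap] at hXZ
    obtain ⟨a, -, rfl⟩ := hXZ
    have ha : a = 1 := by
      rw [tm_lineMap, hZ, lineMap_apply_ring'] at hX
      have : (a - 1) * (tm C - tm Ps) = 0 := by linarith
      rcases mul_eq_zero.mp this with h | h
      · linarith
      · exact absurd (sub_eq_zero.mp h).symm hPs
    rwa [ha, lineMap_apply_one]
  · exact fun hXC => ⟨X, hX, hXC, right_mem_segment ℝ Ps X⟩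

lemma sed_le_iff_sync_mem_cone {Ps E P : Pt} {ε : ℝ} (hE : tm Ps ≠ tm E) (hP : tm Ps ≠ tm P) :
    sed P Ps E ≤ ε ↔ sync Ps E P ∈ cone Ps P ε := by
  rw [mem_cone_iff_sdist_le hP (tm_sync hE P), sed, dist_comm, dist_eq_sdist (tm_sync hE P)]

theorem stmt11_general (k : ℕ) (P : ℕ → Pt)
    (hmono : ∀ i j : ℕ, i < j → j ≤ k → tm (P i) < tm (P j))
    (ε : ℝ) (Q : Pt) (hQt : tm Q = tm (P k)) (hQd : sdist Q (P k) ≤ ε) :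
    (∀ i : ℕ, 1 ≤ i → i ≤ k → sync (P 0) Q (P i) ∈ cone (P 0) (P k) ε) ∧
    ((∀ i : ℕ, 1 ≤ i → i ≤ k → sed (P i) (P 0) Q ≤ ε) ↔
      (∀ i : ℕ, 1 ≤ i → i ≤ k → sync (P 0) Q (P i) ∈ cone (P 0) (P i) ε)) := by
  have hafter : ∀ i, 1 ≤ i → i ≤ k → tm (P 0) < tm (P i) := fun i h₁ h₂ => hmono 0 i h₁ h₂
  have hbefore : ∀ i, i ≤ k → tm (P i) ≤ tm Q := by
    intro i hi
    rw [hQt]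
    rcases hi.lt_or_eq with hlt | rfl
    · exact (hmono i k hlt le_rfl).le
    · exact le_rfl
  refine ⟨fun i h₁ h₂ => ⟨Q, hQt, hQd, sync_mem_segment (hafter i h₁ h₂).le (hbefore i h₂)⟩,
    forall_congr' fun i => imp_congr_right fun h₁ => imp_congr_right fun h₂ => ?_⟩
  have h0i := hafter i h₁ h₂
  exact sed_le_iff_sync_mem_cone (h0i.trans_le (hbefore i h₂)).ne h0i.ne

/-- for Q in the synchronous circle O(P_{s+k}, ε), every synchronized
point of P_{s+i} w.r.t. segment P_sQ lies in the cone C(P_s, O(P_{s+k}, ε)); and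
sed(P_{s+i}, P_sQ) ≤ ε for all i iff the segment P_sQ passes through every cone
C(P_s, O(P_{s+i}, ε)), i.e. each synchronized point lies in the corresponding cone. -/
theorem stmt11 (k : ℕ) (hk : 1 ≤ k) (P : ℕ → Pt)
    (hmono : ∀ i j : ℕ, i < j → j ≤ k → tm (P i) < tm (P j))
    (ε : ℝ) (hε : 0 < ε) (Q : Pt) (hQt : tm Q = tm (P k)) (hQd : sdist Q (P k) ≤ ε) :
    (∀ i : ℕ, 1 ≤ i → i ≤ k → sync (P 0) Q (P i) ∈ cone (P 0) (P k) ε) ∧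
    ((∀ i : ℕ, 1 ≤ i → i ≤ k → sed (P i) (P 0) Q ≤ ε) ↔
      (∀ i : ℕ, 1 ≤ i → i ≤ k → sync (P 0) Q (P i) ∈ cone (P 0) (P i) ε)) :=
  stmt11_general k P hmono ε Q hQt hQd
end
end

section
/- Let Q be the center of the intersection polygon R*_k = ⋂_{i=1}^k R_{s+i} (inscribed regular m-gons of the projection disks of cones C(P_s, O(P_{s+i}, ε)) on the plane X.t = P_{s+k}.t), assuming R*_k ≠ ∅. Then for the point Q (with Q.t = P_{s+k}.t): sed(P_{s+i}, segment P_sQ) ≤ ε for every i ∈ [1, k]; in particular any point of R*_k is a feasible endpoint for a weak simplification segment. -/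
noncomputable section

/-- The j-th vertex direction in the spatial plane (time coordinate 0). -/
def uvec3 (m j : ℕ) : Pt :=
  WithLp.toLp 2 ![Real.cos (2 * Real.pi * j / m), Real.sin (2 * Real.pi * j / m), 0]

/-- The inscribed regular m-gon of the projection disk (on the plane
X.t = t_c) of the cone with apex Ps over the disk of radius ε centered at Pi:
the disk has center Ps + c·(Pi - Ps) and radius c·ε, c = (t_c - Ps.t)/(Pi.t - Ps.t). -/
def projNgon (Ps Pi : Pt) (ε tc : ℝ) (m : ℕ) : Set Pt :=
  convexHull ℝ (Set.range fun j : Fin m =>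
    (Ps + ((tc - tm Ps) / (tm Pi - tm Ps)) • (Pi - Ps)) +
      (((tc - tm Ps) / (tm Pi - tm Ps)) * ε) • uvec3 m (j : ℕ))

/-!
The polygon `projNgon P₀ Pᵢ ε t m` is the image, under the homothety with centre `P₀` and ratio
`c = (t - P₀.t) / (Pᵢ.t - P₀.t)`, of the regular `m`-gon inscribed in the spatial `ε`-disk around
`Pᵢ`. That `m`-gon lies in the closed `ε`-ball around `Pᵢ` and in the time plane of `Pᵢ`, so if
`Q` is the image of `Y`, the point of the segment `P₀Q` synchronized with `Pᵢ` is `Y` itself.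
-/

lemma tm_add (X Y : Pt) : tm (X + Y) = tm X + tm Y := rfl

lemma tm_smul (a : ℝ) (X : Pt) : tm (a • X) = a * tm X := rfl

lemma isLinearMap_tm : IsLinearMap ℝ tm := ⟨tm_add, tm_smul⟩

lemma tm_homothety (O X : Pt) (c : ℝ) :
    tm (AffineMap.homothety O c X) = tm O + c * (tm X - tm O) := by
  simp only [AffineMap.homothety_apply, vsub_eq_sub, vadd_eq_add, tm, PiLp.add_apply,
    PiLp.smul_apply, PiLp.sub_apply, smul_eq_mul]
  ring

lemma tm_uvec3 (m j : ℕ) : tm (uvec3 m j) = 0 := by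
  simp [tm, uvec3]

lemma norm_uvec3 (m j : ℕ) : ‖uvec3 m j‖ = 1 := by
  simp [EuclideanSpace.norm_eq, Fin.sum_univ_three, uvec3]

lemma projNgon_eq_image_homothety (Ps Pi : Pt) (ε tc : ℝ) (m : ℕ) :
    projNgon Ps Pi ε tc m =
      AffineMap.homothety Ps ((tc - tm Ps) / (tm Pi - tm Ps)) ''
        convexHull ℝ (Set.range fun j : Fin m => Pi + ε • uvec3 m j) := by
  rw [AffineMap.image_convexHull, ← Set.range_comp, projNgon]
  congr 2
  funext j
  simp only [Function.comp_apply, AffineMap.homothety_apply, vsub_eq_sub, vadd_eq_add]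
  module

lemma convexHull_range_add_smul_uvec3_subset (Pi : Pt) {ε : ℝ} (hε : 0 ≤ ε) (m : ℕ) :
    convexHull ℝ (Set.range fun j : Fin m => Pi + ε • uvec3 m j) ⊆
      Metric.closedBall Pi ε ∩ {X | tm X = tm Pi} := by
  refine convexHull_min ?_ ((convex_closedBall Pi ε).inter (convex_hyperplane isLinearMap_tm _))
  rintro _ ⟨j, rfl⟩
  refine ⟨?_, ?_⟩
  · rw [Metric.mem_closedBall, dist_eq_norm, add_sub_cancel_left, norm_smul, norm_uvec3,
      Real.norm_of_nonneg hε, mul_one]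
  · rw [Set.mem_ofPred_eq, tm_add, tm_smul, tm_uvec3, mul_zero, add_zero]

lemma sync_homothety (Ps Pi Y : Pt) {c : ℝ} (hc : c ≠ 0) (hPi : tm Pi ≠ tm Ps)
    (hY : tm Y = tm Pi) : sync Ps (AffineMap.homothety Ps c Y) Pi = Y := by
  have hcoef : (tm Pi - tm Ps) / (tm (AffineMap.homothety Ps c Y) - tm Ps) = c⁻¹ := by
    rw [tm_homothety, hY, add_sub_cancel_left, div_mul_cancel_right₀ (sub_ne_zero.2 hPi)]
  rw [sync, hcoef, AffineMap.homothety_apply, vsub_eq_sub, vadd_eq_add, add_sub_cancel_right,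
    smul_smul, inv_mul_cancel₀ hc, one_smul, add_sub_cancel]

theorem sed_le_of_mem_projNgon {Ps Pi Q : Pt} {ε tc : ℝ} {m : ℕ} (hε : 0 ≤ ε)
    (hPi : tm Pi ≠ tm Ps) (htc : tc ≠ tm Ps) (hQ : Q ∈ projNgon Ps Pi ε tc m) :
    sed Pi Ps Q ≤ ε := by
  rw [projNgon_eq_image_homothety] at hQ
  obtain ⟨Y, hY, rfl⟩ := hQ
  obtain ⟨hYball, hYt⟩ := convexHull_range_add_smul_uvec3_subset Pi hε m hY
  have hc : (tc - tm Ps) / (tm Pi - tm Ps) ≠ 0 :=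
    div_ne_zero (sub_ne_zero.2 htc) (sub_ne_zero.2 hPi)
  rw [sed, sync_homothety Ps Pi Y hc hPi hYt, dist_comm]
  exact hYball

theorem stmt19_general (m : ℕ) (k : ℕ) (P : ℕ → Pt)
    (hmono : ∀ i j : ℕ, i < j → j ≤ k → tm (P i) < tm (P j))
    (ε : ℝ) (hε : 0 < ε) :
    ∀ Q ∈ ⋂ i ∈ Set.Icc 1 k, projNgon (P 0) (P i) ε (tm (P k)) m,
      ∀ i : ℕ, 1 ≤ i → i ≤ k → sed (P i) (P 0) Q ≤ ε := by
  intro Q hQ i hi hik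
  exact sed_le_of_mem_projNgon hε.le (hmono 0 i hi hik).ne'
    (hmono 0 k (hi.trans hik) le_rfl).ne' (Set.mem_iInter₂.1 hQ i ⟨hi, hik⟩)

/-- if the intersection R*_k of the inscribed regular m-gons of the
projection disks on the plane X.t = P_{s+k}.t is nonempty, then every point Q of
R*_k (in particular its center) is a feasible endpoint for a weak simplification
segment: sed(P_{s+i}, segment P_sQ) ≤ ε for every i ∈ [1, k]. -/
theorem stmt19 (m : ℕ) (hm : 3 ≤ m) (k : ℕ) (hk : 1 ≤ k) (P : ℕ → Pt)
    (hmono : ∀ i j : ℕ, i < j → j ≤ k → tm (P i) < tm (P j))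
    (ε : ℝ) (hε : 0 < ε)
    (hne : (⋂ i ∈ Set.Icc 1 k, projNgon (P 0) (P i) ε (tm (P k)) m).Nonempty) :
    ∀ Q ∈ ⋂ i ∈ Set.Icc 1 k, projNgon (P 0) (P i) ε (tm (P k)) m,
      ∀ i : ℕ, 1 ≤ i → i ≤ k → sed (P i) (P 0) Q ≤ ε :=
  stmt19_general m k P hmono ε hε
end
end
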